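/- For τ > 0 let w(r) = e^{−τr} (1 + 2rτ)^{1/2} for r > 0. Then w satisfies: (i) w(r) ≥ 0 for all r > 0; (ii) w'(r) = −2rτ² e^{−τr} (1+2rτ)^{−1/2} ≤ 0 for all r > 0; (iii) the identity (1/4)·w'(r)² + (1/2)·w(r)·w''(r) − w(r)·w'(r)/(2r) = r·τ³·e^{−2rτ}·(2 + 3rτ)/(1 + 2rτ) holds for all r > 0, and in particular this quantity is nonnegative, so that r·( w'(r)² + 2·w(r)·w''(r) ) ≥ 2·w(r)·w'(r) for all r > 0. -/

import Mathlib

/-!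
With `u = 1 + 2rτ` the weight is `w = e^{-τr} √u`, so `w' = -2rτ² e^{-τr} / √u` and
`w'' = 2τ² e^{-τr} (2r²τ² - 1) / √u³`. Substituting these, the identity becomes a polynomial
identity in `r, τ, e^{-τr}, √u` modulo `(√u)² = u`.
-/

/-- The weight `w(r) = e^{−τr}(1+2rτ)^{1/2}` for `τ > 0`. -/
noncomputable def hardyWeight (τ : ℝ) (r : ℝ) : ℝ :=
  Real.exp (-τ * r) * (1 + 2 * r * τ) ^ ((1 : ℝ) / 2)

open Real Filter Topology

theorem rpow_neg_one_div_two_eq_inv_sqrt {x : ℝ} (hx : 0 ≤ x) : x ^ (-(1 : ℝ) / 2) = (√x)⁻¹ := by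
  rw [neg_div, rpow_neg hx, sqrt_eq_rpow]

theorem two_mul_mul_le_of_hardy_nonneg {r w w' w'' : ℝ} (hr : 0 < r)
    (h : 0 ≤ (1 / 4) * w' ^ 2 + (1 / 2) * w * w'' - w * w' / (2 * r)) :
    2 * w * w' ≤ r * (w' ^ 2 + 2 * w * w'') := by
  have hscale : 4 * r * ((1 / 4) * w' ^ 2 + (1 / 2) * w * w'' - w * w' / (2 * r))
      = r * (w' ^ 2 + 2 * w * w'') - 2 * w * w' := by
    field_simp
    ring
  nlinarith [mul_nonneg (by positivity : (0 : ℝ) ≤ 4 * r) h]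

section HardyWeight

variable {τ r : ℝ}

theorem hardyWeight_eq_exp_mul_sqrt (τ r : ℝ) :
    hardyWeight τ r = exp (-τ * r) * √(1 + 2 * r * τ) := by
  rw [hardyWeight, sqrt_eq_rpow]

theorem hardyWeight_nonneg (τ r : ℝ) : 0 ≤ hardyWeight τ r := by
  rw [hardyWeight_eq_exp_mul_sqrt]
  positivity

theorem hasDerivAt_exp_neg_mul (τ r : ℝ) :
    HasDerivAt (fun s => exp (-τ * s)) (exp (-τ * r) * -τ) r := by
  simpa using ((hasDerivAt_id r).const_mul (-τ)).exp

theorem hasDerivAt_sqrt_one_add_two_mul_mul (hu : 0 < 1 + 2 * r * τ) :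
    HasDerivAt (fun s => √(1 + 2 * s * τ)) (2 * τ / (2 * √(1 + 2 * r * τ))) r := by
  have hlin : HasDerivAt (fun s => 1 + 2 * s * τ) (2 * τ) r := by
    simpa using (((hasDerivAt_id r).const_mul 2).mul_const τ).const_add 1
  exact hlin.sqrt hu.ne'

theorem hasDerivAt_hardyWeight (hu : 0 < 1 + 2 * r * τ) :
    HasDerivAt (hardyWeight τ) (-2 * r * τ ^ 2 * exp (-τ * r) / √(1 + 2 * r * τ)) r := by
  rw [show hardyWeight τ = _ from funext (hardyWeight_eq_exp_mul_sqrt τ)]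
  refine ((hasDerivAt_exp_neg_mul τ r).mul (hasDerivAt_sqrt_one_add_two_mul_mul hu)).congr_deriv ?_
  have hS : √(1 + 2 * r * τ) ^ 2 = 1 + 2 * r * τ := sq_sqrt hu.le
  have hS0 : 0 < √(1 + 2 * r * τ) := sqrt_pos.2 hu
  generalize √(1 + 2 * r * τ) = S at hS hS0 ⊢
  field_simp
  linear_combination (-τ) * hS

theorem deriv_hardyWeight_nonpos (hr : 0 ≤ r) (hu : 0 < 1 + 2 * r * τ) :
    deriv (hardyWeight τ) r ≤ 0 := by
  rw [(hasDerivAt_hardyWeight hu).deriv, neg_mul, neg_mul, neg_mul, neg_div, neg_nonpos]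
  positivity

theorem deriv_hardyWeight_eventuallyEq (hu : 0 < 1 + 2 * r * τ) :
    deriv (hardyWeight τ) =ᶠ[𝓝 r]
      fun s => -2 * s * τ ^ 2 * exp (-τ * s) / √(1 + 2 * s * τ) := by
  have hnear : ∀ᶠ s in 𝓝 r, 0 < 1 + 2 * s * τ :=
    continuousAt_const.eventually_lt (by fun_prop) hu
  exact hnear.mono fun s hs => (hasDerivAt_hardyWeight hs).deriv

theorem hasDerivAt_deriv_hardyWeight (hu : 0 < 1 + 2 * r * τ) :
    HasDerivAt (deriv (hardyWeight τ))
      (2 * τ ^ 2 * exp (-τ * r) * (2 * r ^ 2 * τ ^ 2 - 1) / √(1 + 2 * r * τ) ^ 3) r := by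
  have hpoly : HasDerivAt (fun s => -2 * s * τ ^ 2) (-2 * τ ^ 2) r := by
    simpa using ((hasDerivAt_id r).const_mul (-2)).mul_const (τ ^ 2)
  have hS : √(1 + 2 * r * τ) ^ 2 = 1 + 2 * r * τ := sq_sqrt hu.le
  have hS0 : 0 < √(1 + 2 * r * τ) := sqrt_pos.2 hu
  refine HasDerivAt.congr_of_eventuallyEq ?_ (deriv_hardyWeight_eventuallyEq hu)
  refine ((hpoly.mul (hasDerivAt_exp_neg_mul τ r)).div
    (hasDerivAt_sqrt_one_add_two_mul_mul hu) hS0.ne').congr_deriv ?_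
  simp only [Pi.mul_apply]
  generalize √(1 + 2 * r * τ) = S at hS hS0 ⊢
  field_simp
  linear_combination (τ ^ 3 * r - τ ^ 2) * hS

theorem hardyWeight_hardy_identity (hr : r ≠ 0) (hu : 0 < 1 + 2 * r * τ) :
    (1 / 4) * deriv (hardyWeight τ) r ^ 2
        + (1 / 2) * hardyWeight τ r * deriv (deriv (hardyWeight τ)) r
        - hardyWeight τ r * deriv (hardyWeight τ) r / (2 * r)
      = r * τ ^ 3 * exp (-2 * r * τ) * (2 + 3 * r * τ) / (1 + 2 * r * τ) := by
  have hexp : exp (-2 * r * τ) = exp (-τ * r) ^ 2 := by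
    rw [sq, ← exp_add]
    ring_nf
  have hS : √(1 + 2 * r * τ) ^ 2 = 1 + 2 * r * τ := sq_sqrt hu.le
  have hS0 : 0 < √(1 + 2 * r * τ) := sqrt_pos.2 hu
  have hu' : 1 + 2 * r * τ ≠ 0 := hu.ne'
  rw [(hasDerivAt_deriv_hardyWeight hu).deriv, (hasDerivAt_hardyWeight hu).deriv,
    hardyWeight_eq_exp_mul_sqrt, hexp]
  generalize √(1 + 2 * r * τ) = S at hS hS0 ⊢
  field_simp
  linear_combination (4 * τ ^ 2 - 12 * τ ^ 4 * r ^ 2) * hS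

end HardyWeight

/-- For `τ > 0` and `w(r) = e^{−τr}(1+2rτ)^{1/2}`, for all `r > 0`:
(i) `w(r) ≥ 0`; (ii) `w'(r) = −2rτ² e^{−τr}(1+2rτ)^{−1/2} ≤ 0`;
(iii) `(1/4)w'² + (1/2)ww'' − ww'/(2r) = rτ³e^{−2rτ}(2+3rτ)/(1+2rτ) ≥ 0`, and hence
`r(w'² + 2ww'') ≥ 2ww'`. -/
theorem hardyWeight_properties (τ : ℝ) (hτ : 0 < τ) (r : ℝ) (hr : 0 < r) :
    0 ≤ hardyWeight τ r
    ∧ deriv (hardyWeight τ) r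
        = -2 * r * τ ^ 2 * Real.exp (-τ * r) * (1 + 2 * r * τ) ^ (-(1 : ℝ) / 2)
    ∧ deriv (hardyWeight τ) r ≤ 0
    ∧ (1 / 4) * (deriv (hardyWeight τ) r) ^ 2
        + (1 / 2) * hardyWeight τ r * deriv (deriv (hardyWeight τ)) r
        - hardyWeight τ r * deriv (hardyWeight τ) r / (2 * r)
      = r * τ ^ 3 * Real.exp (-2 * r * τ) * (2 + 3 * r * τ) / (1 + 2 * r * τ)
    ∧ 0 ≤ r * τ ^ 3 * Real.exp (-2 * r * τ) * (2 + 3 * r * τ) / (1 + 2 * r * τ)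
    ∧ 2 * hardyWeight τ r * deriv (hardyWeight τ) r
        ≤ r * ((deriv (hardyWeight τ) r) ^ 2
            + 2 * hardyWeight τ r * deriv (deriv (hardyWeight τ)) r) := by
  have hu : 0 < 1 + 2 * r * τ := by positivity
  have hidentity := hardyWeight_hardy_identity hr.ne' hu
  have hrhs : 0 ≤ r * τ ^ 3 * Real.exp (-2 * r * τ) * (2 + 3 * r * τ) / (1 + 2 * r * τ) := by
    positivity
  refine ⟨hardyWeight_nonneg τ r, ?_, deriv_hardyWeight_nonpos hr.le hu, hidentity, hrhs,
    two_mul_mul_le_of_hardy_nonneg hr (hidentity ▸ hrhs)⟩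
  rw [(hasDerivAt_hardyWeight hu).deriv, rpow_neg_one_div_two_eq_inv_sqrt hu.le, div_eq_mul_inv]
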